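/- If two idempotent states x and y are close enough (i.e., listing x = {x_1 < ... < x_k} and y = {y_1 < ... < y_k}, one has |x_j − y_j| ≤ 1 for all j), then |v^x_i − v^y_i| ≤ 1 for every i in {1,...,m}; equivalently, every coordinate of the minimal relative weight vector w^{x,y} is at most 1/2. -/
import Mathlib

def stateWeight {m : ℕ} (x : Finset (Fin (m + 1))) (i : ℕ) : ℕ :=
  (x.filter (fun a => i ≤ a.val)).card

lemma stateWeight_eq {m k : ℕ} (x : Finset (Fin (m + 1))) (hx : x.card = k) (i : ℕ) :
    stateWeight x i =
      (Finset.univ.filter (fun j : Fin k => i ≤ (x.orderEmbOfFin hx j).val)).card := by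
  unfold stateWeight
  refine (Finset.card_bij (fun j _ => x.orderEmbOfFin hx j) ?_ ?_ ?_).symm
  · intro j hj
    simp only [Finset.mem_filter, Finset.mem_univ, true_and] at hj ⊢
    exact ⟨x.orderEmbOfFin_mem hx j, hj⟩
  · intro j _ j' _ h
    exact (x.orderEmbOfFin hx).injective h
  · intro a ha
    simp only [Finset.mem_filter] at ha
    obtain ⟨j, hj⟩ := (Set.ext_iff.mp (x.range_orderEmbOfFin hx) a).mpr ha.1
    exact ⟨j, by simp [hj, ha.2], hj⟩

lemma aux {m k : ℕ} (x y : Finset (Fin (m + 1))) (hx : x.card = k) (hy : y.card = k)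
    (hclose : ∀ j : Fin k,
      ((x.orderEmbOfFin hx j : Fin (m + 1)) : ℕ) ≤ ((y.orderEmbOfFin hy j : Fin (m + 1)) : ℕ) + 1)
    (i : ℕ) : stateWeight x i ≤ stateWeight y i + 1 := by
  rw [stateWeight_eq x hx i, stateWeight_eq y hy i]
  set f := x.orderEmbOfFin hx
  set g := y.orderEmbOfFin hy
  set A := Finset.univ.filter (fun j : Fin k => i ≤ (f j).val) with hA
  set B := Finset.univ.filter (fun j : Fin k => i ≤ (g j).val) with hB
  by_contra hcon
  push_neg at hcon
  have hAk : A.card ≤ k := le_trans (Finset.card_le_univ A) (by simp)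
  have hb2 : B.card + 2 ≤ A.card := hcon
  -- t := k - B.card - 1, t' := k - B.card - 2
  have htlt : k - B.card - 1 < k := by omega
  have ht'lt : k - B.card - 2 < k := by omega
  set t : Fin k := ⟨k - B.card - 1, htlt⟩
  set t' : Fin k := ⟨k - B.card - 2, ht'lt⟩
  -- membership in A for j with k ≤ j + A.card
  have hmemA : ∀ j : Fin k, k ≤ j.val + A.card → j ∈ A := by
    intro j hj
    by_contra hjA
    have hsub : Finset.Iic j ⊆ Finset.univ \ A := by
      intro j' hj'
      simp only [Finset.mem_Iic] at hj'
      simp only [Finset.mem_sdiff, Finset.mem_univ, true_and]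
      intro hj'A
      apply hjA
      simp only [hA, Finset.mem_filter, Finset.mem_univ, true_and] at hj'A ⊢
      exact le_trans hj'A (Nat.le_of_lt_succ (Nat.lt_succ_of_le (f.monotone hj')))
    have := Finset.card_le_card hsub
    rw [Fin.card_Iic, Finset.card_sdiff_of_subset (Finset.subset_univ A)] at this
    simp only [Finset.card_univ, Fintype.card_fin] at this
    omega
  have htA : t ∈ A := hmemA t (by simp only [t]; omega)
  have ht'A : t' ∈ A := hmemA t' (by simp only [t']; omega)
  -- t ∉ B
  have htB : t ∉ B := by
    intro htB
    have hsub : Finset.Ici t ⊆ B := by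
      intro j' hj'
      simp only [Finset.mem_Ici] at hj'
      simp only [hB, Finset.mem_filter, Finset.mem_univ, true_and] at htB ⊢
      exact le_trans htB (g.monotone hj')
    have := Finset.card_le_card hsub
    rw [Fin.card_Ici] at this
    simp only [t] at this
    omega
  simp only [hA, hB, Finset.mem_filter, Finset.mem_univ, true_and, not_le] at htA ht'A htB
  have hlt : (f t').val < (f t).val := f.strictMono (by simp only [t, t', Fin.mk_lt_mk]; omega)
  have := hclose t
  omega

/-- If two idempotent states `x = {x_1 < ... < x_k}` and
`y = {y_1 < ... < y_k}` are close enough, i.e. `|x_j − y_j| ≤ 1` for all `j`,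
then `|v^x_i − v^y_i| ≤ 1` for every `i ∈ {1,...,m}` (equivalently, every
coordinate of the minimal relative weight vector `w^{x,y}` is at most `1/2`). -/
theorem close_enough_weights (m k : ℕ) (hk : k ≤ m + 1)
    (x y : Finset (Fin (m + 1))) (hx : x.card = k) (hy : y.card = k)
    (hclose : ∀ j : Fin k,
      |(((x.orderIsoOfFin hx j : Fin (m + 1)) : ℕ) : ℤ) -
        (((y.orderIsoOfFin hy j : Fin (m + 1)) : ℕ) : ℤ)| ≤ 1) :
    ∀ i : ℕ, 1 ≤ i → i ≤ m →
      |(stateWeight x i : ℤ) - (stateWeight y i : ℤ)| ≤ 1 := by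
  intro i _ _
  have hxy : stateWeight x i ≤ stateWeight y i + 1 := by
    refine aux x y hx hy (fun j => ?_) i
    have := hclose j
    rw [← Finset.coe_orderIsoOfFin_apply, ← Finset.coe_orderIsoOfFin_apply]
    rw [abs_le] at this
    omega
  have hyx : stateWeight y i ≤ stateWeight x i + 1 := by
    refine aux y x hy hx (fun j => ?_) i
    have := hclose j
    rw [← Finset.coe_orderIsoOfFin_apply, ← Finset.coe_orderIsoOfFin_apply]
    rw [abs_le] at this
    omega
  rw [abs_le]
  omega
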